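/- Let ℓ : ℝ^q → ℝ be differentiable at β⁰ ∈ ℝ^q with gradient g = ∇ℓ(β⁰), let λ ≥ 0, w ≥ 0, and define f(β) = −ℓ(β) + λw‖β‖₂. Fix h < 0, let β̄ be a global minimizer of the penalized quadratic approximation Q, suppose s = β̄ − β⁰ ≠ 0, and set Δ = −⟨s, g⟩ + λw‖β̄‖₂ − λw‖β⁰‖₂. Then for every δ ∈ (0,1) there exists ᾱ ∈ (0,1] such that for all α ∈ (0, ᾱ], f(β⁰ + αs) − f(β⁰) ≤ α δ Δ. (Hence the Armijo line search used in the paper's coordinate descent step always terminates with a step size achieving sufficient decrease.) -/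

import Mathlib

/-!
Testing minimality of `β̄` against `β⁰` gives `Δ ≤ (h/2)‖s‖² < 0`. Along the segment `β⁰ + αs`
the smooth part `−ℓ` changes by `−α⟨s, g⟩ + o(α)`, and convexity of the norm bounds the change of
the penalty by `α(λw‖β̄‖ − λw‖β⁰‖)`; so `f(β⁰ + αs) − f(β⁰) ≤ α(Δ + o(1))`, which is at most
`αδΔ` for small `α` because `δ < 1` and `Δ < 0`.
-/

open scoped RealInnerProductSpace
open Set Filter Topology

section PenalizedQuadratic

variable {E : Type*} [NormedAddCommGroup E] [InnerProductSpace ℝ E]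

noncomputable def penalizedQuadratic (g β0 : E) (h c : ℝ) (β : E) : ℝ :=
  -(⟪β - β0, g⟫ + (h / 2) * ‖β - β0‖ ^ 2) + c * ‖β‖

theorem penalizedQuadratic_decrement_le {g β0 βbar : E} {h c : ℝ}
    (hmin : penalizedQuadratic g β0 h c βbar ≤ penalizedQuadratic g β0 h c β0) :
    -⟪βbar - β0, g⟫ + c * ‖βbar‖ - c * ‖β0‖ ≤ h / 2 * ‖βbar - β0‖ ^ 2 := by
  simp only [penalizedQuadratic, sub_self, inner_zero_left, norm_zero] at hmin
  linarith

end PenalizedQuadratic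

theorem eventually_armijo_of_hasDerivAt_of_convexOn {φ χ : ℝ → ℝ} {d δ : ℝ}
    (hφ : HasDerivAt φ d 0) (hχ : ConvexOn ℝ (Icc 0 1) χ) (hΔ : d + χ 1 - χ 0 < 0)
    (hδ : δ < 1) :
    ∀ᶠ a in 𝓝[>] 0, φ a + χ a - (φ 0 + χ 0) ≤ a * δ * (d + χ 1 - χ 0) := by
  set Δ := d + χ 1 - χ 0
  have hslack : d < d + (δ - 1) * Δ := by nlinarith
  have hslope : ∀ᶠ a in 𝓝[>] (0 : ℝ), a⁻¹ • (φ (0 + a) - φ 0) < d + (δ - 1) * Δ :=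
    hφ.tendsto_slope_zero_right.eventually (gt_mem_nhds hslack)
  have hsmall : ∀ᶠ a in 𝓝[>] (0 : ℝ), a ∈ Ioo 0 1 := Ioo_mem_nhdsGT zero_lt_one
  filter_upwards [hslope, hsmall] with a hsl ⟨ha0, ha1⟩
  have hsmooth : φ a - φ 0 ≤ a * (d + (δ - 1) * Δ) := by
    rw [zero_add, smul_eq_mul, inv_mul_lt_iff₀ ha0] at hsl
    exact hsl.le
  have hchord : χ a ≤ (1 - a) * χ 0 + a * χ 1 := by
    simpa using hχ.2 (left_mem_Icc.2 zero_le_one) (right_mem_Icc.2 zero_le_one)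
      (sub_nonneg.2 ha1.le) ha0.le (sub_add_cancel 1 a)
  nlinarith

theorem exists_Ioc_forall_of_eventually_nhdsGT {p : ℝ → Prop} (hp : ∀ᶠ a in 𝓝[>] 0, p a) :
    ∃ abar ∈ Ioc (0 : ℝ) 1, ∀ a ∈ Ioc 0 abar, p a := by
  obtain ⟨u, hu, hsub⟩ := mem_nhdsGT_iff_exists_Ioc_subset.1 hp
  exact ⟨min u 1, ⟨lt_min hu zero_lt_one, min_le_right _ _⟩,
    fun a ha => hsub ⟨ha.1, ha.2.trans (min_le_left _ _)⟩⟩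

theorem stmt_4_general (q : ℕ) (lam w h : ℝ)
    (hlam : 0 ≤ lam) (hw : 0 ≤ w) (hh : h < 0)
    (l : EuclideanSpace ℝ (Fin q) → ℝ)
    (g β0 βbar : EuclideanSpace ℝ (Fin q))
    (hgrad : HasGradientAt l g β0)
    (hmin : ∀ β : EuclideanSpace ℝ (Fin q),
      (-(⟪βbar - β0, g⟫ + (h / 2) * ‖βbar - β0‖ ^ 2) + lam * w * ‖βbar‖)
        ≤ -(⟪β - β0, g⟫ + (h / 2) * ‖β - β0‖ ^ 2) + lam * w * ‖β‖)
    (hs : βbar - β0 ≠ 0) :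
    let f : EuclideanSpace ℝ (Fin q) → ℝ := fun β => -l β + lam * w * ‖β‖
    let s : EuclideanSpace ℝ (Fin q) := βbar - β0
    let Δ : ℝ := -⟪s, g⟫ + lam * w * ‖βbar‖ - lam * w * ‖β0‖
    ∀ δ ∈ Set.Ioo (0 : ℝ) 1, ∃ abar ∈ Set.Ioc (0 : ℝ) 1,
      ∀ a ∈ Set.Ioc (0 : ℝ) abar, f (β0 + a • s) - f β0 ≤ a * δ * Δ := by
  intro f s Δ δ hδ
  have hΔ : Δ < 0 := (penalizedQuadratic_decrement_le (hmin β0)).trans_lt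
    (mul_neg_of_neg_of_pos (by linarith) (by positivity))
  have hline : HasDerivAt (fun a : ℝ => -l (β0 + a • s)) (-⟪s, g⟫) 0 := by
    have hβ : HasDerivAt (fun a : ℝ => β0 + a • s) s 0 := by
      simpa using ((hasDerivAt_id (0 : ℝ)).smul_const s).const_add β0
    have hl : HasDerivAt (fun a : ℝ => l (β0 + a • s)) ⟪s, g⟫ 0 := by
      simpa [Function.comp_def, real_inner_comm] using
        hgrad.hasFDerivAt.comp_hasDerivAt_of_eq 0 hβ (by simp)
    exact hl.neg
  have hnorm : ConvexOn ℝ (Icc 0 1) (fun a : ℝ => lam * w * ‖β0 + a • s‖) := by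
    have hseg : ConvexOn ℝ univ (fun a : ℝ => ‖β0 + a • s‖) := by
      simpa [Function.comp_def, AffineMap.lineMap_apply_module', add_comm] using
        (convexOn_norm convex_univ).comp_affineMap (AffineMap.lineMap (k := ℝ) β0 βbar)
    exact (hseg.subset (subset_univ _) (convex_Icc 0 1)).smul (mul_nonneg hlam hw)
  obtain ⟨abar, habar, hstep⟩ := exists_Ioc_forall_of_eventually_nhdsGT
    (eventually_armijo_of_hasDerivAt_of_convexOn hline hnorm (by simpa [s, Δ] using hΔ) hδ.2)
  exact ⟨abar, habar, fun a ha => by simpa [f, s, Δ, sub_eq_add_neg, add_assoc] using hstep a ha⟩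

/-- The Armijo line search terminates: for every `δ ∈ (0,1)` there is a
threshold `ᾱ ∈ (0,1]` such that every step size `α ∈ (0, ᾱ]` achieves the
sufficient decrease `f(β⁰ + αs) − f(β⁰) ≤ αδΔ`. -/
theorem stmt_4 (q : ℕ) (hq : 1 ≤ q) (lam w h : ℝ)
    (hlam : 0 ≤ lam) (hw : 0 ≤ w) (hh : h < 0)
    (l : EuclideanSpace ℝ (Fin q) → ℝ)
    (g β0 βbar : EuclideanSpace ℝ (Fin q))
    (hgrad : HasGradientAt l g β0)
    (hmin : ∀ β : EuclideanSpace ℝ (Fin q),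
      (-(⟪βbar - β0, g⟫ + (h / 2) * ‖βbar - β0‖ ^ 2) + lam * w * ‖βbar‖)
        ≤ -(⟪β - β0, g⟫ + (h / 2) * ‖β - β0‖ ^ 2) + lam * w * ‖β‖)
    (hs : βbar - β0 ≠ 0) :
    let f : EuclideanSpace ℝ (Fin q) → ℝ := fun β => -l β + lam * w * ‖β‖
    let s : EuclideanSpace ℝ (Fin q) := βbar - β0
    let Δ : ℝ := -⟪s, g⟫ + lam * w * ‖βbar‖ - lam * w * ‖β0‖
    ∀ δ ∈ Set.Ioo (0 : ℝ) 1, ∃ abar ∈ Set.Ioc (0 : ℝ) 1,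
      ∀ a ∈ Set.Ioc (0 : ℝ) abar, f (β0 + a • s) - f β0 ≤ a * δ * Δ :=
  stmt_4_general q lam w h hlam hw hh l g β0 βbar hgrad hmin hs
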